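/- arXiv:1703.00885 — 6 statements merged into one kernel-verified Lean document; each statement's English description precedes it below -/
import Mathlib

section
/- Let m, d, u be natural numbers with d ≥ m+1 and u ≤ m. Let L : ℝ^d → ℝ^m be a surjective linear map. If Θ₁, Θ₂ : ℝ^m → ℝ^u are both surjective linear maps satisfying Θ₁ ∘ L (ℤ^d) ⊆ ℤ^u and Θ₂ ∘ L (ℤ^d) ⊆ ℤ^u, and u is the largest integer for which such a surjective map exists (the rational dimension of L), then ker Θ₁ = ker Θ₂. -/
/-!
If `ker Θ₁ ⊄ ker Θ₂`, some coordinate `φ` of `Θ₂` is nonzero on `ker Θ₁`. Appending `φ` to `Θ₁`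
gives a surjection onto `ℝ^(u+1)` which still sends `L(ℤ^d)` into the integer lattice,
contradicting the maximality of `u`.
-/

open Function LinearMap

variable {K V : Type*} [Field K] [AddCommGroup V] [Module K V]

lemma surjective_vecCons_of_not_ker_le {n : ℕ} {f : V →ₗ[K] Fin n → K} (hf : Surjective f)
    {φ : V →ₗ[K] K} (hker : ¬ ker f ≤ ker φ) : Surjective (φ.vecCons f) := by
  obtain ⟨v, hv, hφv⟩ := Set.not_subset.mp hker
  rw [SetLike.mem_coe, mem_ker] at hv hφv
  intro y
  obtain ⟨x, hx⟩ := hf (Fin.tail y)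
  refine ⟨x + ((y 0 - φ x) / φ v) • v, funext fun i => Fin.cases ?_ (fun k => ?_) i⟩
  · simp only [vecCons_apply, map_add, map_smul, Pi.add_apply, Pi.smul_apply,
      Matrix.cons_val_zero, smul_eq_mul]
    field_simp
    ring
  · simp [hv, hx, Fin.tail]

lemma ker_le_ker_of_maximal (P : (V →ₗ[K] K) → Prop) {n : ℕ} {f g : V →ₗ[K] Fin n → K}
    (hf : Surjective f) (hPf : ∀ j, P (proj j ∘ₗ f)) (hPg : ∀ j, P (proj j ∘ₗ g))
    (hmax : ∀ (n' : ℕ) (h : V →ₗ[K] Fin n' → K), Surjective h → (∀ j, P (proj j ∘ₗ h)) →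
      n' ≤ n) :
    ker f ≤ ker g := by
  intro v hv
  by_contra hgv
  obtain ⟨j, hj⟩ : ∃ j, g v j ≠ 0 := by
    by_contra! h
    exact hgv (funext h)
  have hker : ¬ ker f ≤ ker (proj j ∘ₗ g) := fun hle => hj (hle hv)
  have := hmax (n + 1) _ (surjective_vecCons_of_not_ker_le hf hker) (Fin.cases (hPg j) hPf)
  omega

theorem stmt_2_general (m d u : ℕ)
    (L : (Fin d → ℝ) →ₗ[ℝ] (Fin m → ℝ))
    (Θ₁ Θ₂ : (Fin m → ℝ) →ₗ[ℝ] (Fin u → ℝ))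
    (h1 : Function.Surjective Θ₁) (h2 : Function.Surjective Θ₂)
    (hint1 : ∀ x : Fin d → ℤ, ∀ j, ∃ z : ℤ, Θ₁ (L (fun i => (x i : ℝ))) j = z)
    (hint2 : ∀ x : Fin d → ℤ, ∀ j, ∃ z : ℤ, Θ₂ (L (fun i => (x i : ℝ))) j = z)
    (hmax : ∀ u' : ℕ, ∀ Θ' : (Fin m → ℝ) →ₗ[ℝ] (Fin u' → ℝ),
      Function.Surjective Θ' →
      (∀ x : Fin d → ℤ, ∀ j, ∃ z : ℤ, Θ' (L (fun i => (x i : ℝ))) j = z) → u' ≤ u) :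
    LinearMap.ker Θ₁ = LinearMap.ker Θ₂ := by
  let IntegralOnLattice (φ : (Fin m → ℝ) →ₗ[ℝ] ℝ) : Prop :=
    ∀ x : Fin d → ℤ, ∃ z : ℤ, φ (L (fun i => (x i : ℝ))) = z
  have hmax' (u' : ℕ) (Θ' : (Fin m → ℝ) →ₗ[ℝ] Fin u' → ℝ) (hs : Surjective Θ')
      (hΘ' : ∀ j, IntegralOnLattice (proj j ∘ₗ Θ')) : u' ≤ u :=
    hmax u' Θ' hs fun x j => hΘ' j x
  exact le_antisymm
    (ker_le_ker_of_maximal _ h1 (fun j x => hint1 x j) (fun j x => hint2 x j) hmax')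
    (ker_le_ker_of_maximal _ h2 (fun j x => hint2 x j) (fun j x => hint1 x j) hmax')

theorem stmt_2 (m d u : ℕ) (hd : m + 1 ≤ d) (hu : u ≤ m)
    (L : (Fin d → ℝ) →ₗ[ℝ] (Fin m → ℝ)) (hL : Function.Surjective L)
    (Θ₁ Θ₂ : (Fin m → ℝ) →ₗ[ℝ] (Fin u → ℝ))
    (h1 : Function.Surjective Θ₁) (h2 : Function.Surjective Θ₂)
    (hint1 : ∀ x : Fin d → ℤ, ∀ j, ∃ z : ℤ, Θ₁ (L (fun i => (x i : ℝ))) j = z)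
    (hint2 : ∀ x : Fin d → ℤ, ∀ j, ∃ z : ℤ, Θ₂ (L (fun i => (x i : ℝ))) j = z)
    (hmax : ∀ u' : ℕ, ∀ Θ' : (Fin m → ℝ) →ₗ[ℝ] (Fin u' → ℝ),
      Function.Surjective Θ' →
      (∀ x : Fin d → ℤ, ∀ j, ∃ z : ℤ, Θ' (L (fun i => (x i : ℝ))) j = z) → u' ≤ u) :
    LinearMap.ker Θ₁ = LinearMap.ker Θ₂ :=
  stmt_2_general m d u L Θ₁ Θ₂ h1 h2 hint1 hint2 hmax
end

section
/- Let m, d be natural numbers with d ≥ m+1, and let L : ℝ^d → ℝ^m be a surjective linear map with rational dimension u ≤ m−1, and let Θ : ℝ^m → ℝ^u be a rational map for L. Then for all τ₁, τ₂ ∈ (0,1], the infimum of dist(L*φ, ℤ^d) over all linear functionals φ on ℝ^m with dist(φ, Θ*((ℝ^u)*)) ≥ τ₁ and ‖φ‖_∞ ≤ τ₂⁻¹ is strictly positive. -/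
/-!
If `φ L` were an integer vector for some `φ` outside the row space of `Θ`, then `Θ` with the
extra row `φ` would still be surjective and map `L(ℤ^d)` into integer vectors, contradicting the
maximality of `u`. Hence `φ ↦ φ L` sends the compact set of admissible `φ` into the complement of
the closed set `ℤ^d`, and a compact set has positive distance from a disjoint closed set.
-/

open Matrix Set Metric

def integerPoints (ι : Type*) : Set (ι → ℝ) :=
  univ.pi fun _ => range ((↑) : ℤ → ℝ)

theorem isClosed_integerPoints (ι : Type*) : IsClosed (integerPoints ι) :=
  isClosed_set_pi fun _ _ => Int.isClosedEmbedding_coe_real.isClosed_range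

def IsIntegralOnLattice {k m n : Type*} [Fintype m] [Fintype n]
    (A : Matrix k m ℝ) (L : Matrix m n ℝ) : Prop :=
  ∀ x : n → ℤ, ∀ i, ∃ z : ℤ, A.mulVec (L.mulVec (fun j => (x j : ℝ))) i = z

section RationalMap

variable {k m n : Type*} [Fintype k] [Fintype m] [Fintype n]

theorem Matrix.surjective_mulVec_iff_linearIndependent_row (A : Matrix k m ℝ) :
    Function.Surjective A.mulVec ↔ LinearIndependent ℝ A.row := by
  have hsurj : Function.Surjective A.mulVec ↔ A.rank = Fintype.card k := by
    rw [← Module.finrank_fintype_fun_eq_card (R := ℝ), Matrix.rank,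
      ← finrank_top ℝ (k → ℝ)]
    exact ⟨fun h => by rw [LinearMap.range_eq_top.2 h], fun h =>
      LinearMap.range_eq_top.1 (Submodule.eq_top_of_finrank_eq (h.trans (finrank_top ℝ _)))⟩
  rw [hsurj, linearIndependent_iff_card_eq_finrank_span, rank_eq_finrank_span_row, eq_comm]
  rfl

theorem Matrix.surjective_mulVec_cons {r : ℕ} {A : Matrix (Fin r) m ℝ}
    (hA : Function.Surjective A.mulVec) {φ : m → ℝ}
    (hφ : φ ∉ LinearMap.range A.vecMulLinear) :
    Function.Surjective (of (Fin.cons φ A : Fin (r + 1) → m → ℝ)).mulVec := by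
  rw [range_vecMulLinear] at hφ
  rw [surjective_mulVec_iff_linearIndependent_row] at hA ⊢
  exact linearIndependent_finCons.2 ⟨hA, hφ⟩

theorem IsIntegralOnLattice.cons {r : ℕ} {A : Matrix (Fin r) m ℝ} {L : Matrix m n ℝ}
    (hA : IsIntegralOnLattice A L) {φ : m → ℝ} (hφ : vecMul φ L ∈ integerPoints n) :
    IsIntegralOnLattice (of (Fin.cons φ A : Fin (r + 1) → m → ℝ)) L := by
  intro x i
  cases i using Fin.cases with
  | zero =>
    choose ω hω using fun j => hφ j (mem_univ j)
    refine ⟨∑ j, ω j * x j, ?_⟩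
    change φ ⬝ᵥ L *ᵥ _ = _
    rw [dotProduct_mulVec, dotProduct, ← funext hω]
    push_cast
    rfl
  | succ i => exact hA x i

theorem mem_range_vecMulLinear_of_vecMul_mem_integerPoints {u : ℕ} {L : Matrix m n ℝ}
    {Θ : Matrix (Fin u) m ℝ} (hΘ : Function.Surjective Θ.mulVec)
    (hint : IsIntegralOnLattice Θ L)
    (hmax : ∀ u' : ℕ, ∀ Θ' : Matrix (Fin u') m ℝ,
      Function.Surjective Θ'.mulVec → IsIntegralOnLattice Θ' L → u' ≤ u)
    {φ : m → ℝ} (hφ : vecMul φ L ∈ integerPoints n) :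
    φ ∈ LinearMap.range Θ.vecMulLinear := by
  by_contra hφΘ
  have := hmax (u + 1) _ (surjective_mulVec_cons hΘ hφΘ) (hint.cons hφ)
  omega

end RationalMap

theorem isCompact_setOf_forall_exists_le_abs_sub_and_abs_le {ι β : Type*} [Finite ι]
    (c : β → ι → ℝ) (τ C : ℝ) :
    IsCompact {φ : ι → ℝ | (∀ b, ∃ i, τ ≤ |φ i - c b i|) ∧ ∀ i, |φ i| ≤ C} := by
  refine (isCompact_univ_pi fun _ => isCompact_Icc (a := -C) (b := C)).of_isClosed_subset
    ?_ fun φ hφ i _ => abs_le.1 (hφ.2 i)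
  simp only [ofPred_and, ofPred_forall, ofPred_exists]
  exact (isClosed_iInter fun b => isClosed_iUnion_of_finite fun i =>
      isClosed_le continuous_const (by fun_prop)).inter
    (isClosed_iInter fun i => isClosed_le (by fun_prop) continuous_const)

theorem exists_pos_forall_lt_dist {α : Type*} [PseudoMetricSpace α] {s t : Set α}
    (hs : IsCompact s) (ht : IsClosed t) (hst : Disjoint s t) :
    ∃ δ > (0 : ℝ), ∀ x ∈ s, ∀ y ∈ t, δ < dist x y := by
  obtain ⟨r, hr, h⟩ := exists_pos_forall_lt_edist hs ht hst
  refine ⟨r, hr, fun x hx y hy => ?_⟩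
  have := h x hx y hy
  rwa [edist_nndist, ENNReal.coe_lt_coe, ← NNReal.coe_lt_coe, coe_nndist] at this

theorem exists_le_abs_sub_of_lt_dist {ι : Type*} [Fintype ι] {f g : ι → ℝ} {δ : ℝ}
    (hδ : 0 < δ) (h : δ < dist f g) : ∃ i, δ ≤ |f i - g i| := by
  by_contra! hlt
  exact (dist_pi_lt_iff hδ).2 (fun i => by rw [Real.dist_eq]; exact hlt i) |>.not_gt h

theorem stmt_3_general (m d u : ℕ)
    (L : Matrix (Fin m) (Fin d) ℝ)
    (Θ : Matrix (Fin u) (Fin m) ℝ) (hΘ : Function.Surjective Θ.mulVec)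
    (hint : ∀ x : Fin d → ℤ, ∀ i, ∃ z : ℤ,
      Θ.mulVec (L.mulVec (fun j => (x j : ℝ))) i = z)
    (hmax : ∀ u' : ℕ, ∀ Θ' : Matrix (Fin u') (Fin m) ℝ,
      Function.Surjective Θ'.mulVec →
      (∀ x : Fin d → ℤ, ∀ i, ∃ z : ℤ,
        Θ'.mulVec (L.mulVec (fun j => (x j : ℝ))) i = z) → u' ≤ u)
    (τ₁ τ₂ : ℝ) (hτ₁ : 0 < τ₁) :
    ∃ δ > (0 : ℝ), ∀ φ : Fin m → ℝ,
      (∀ ψ : Fin u → ℝ, ∃ i, τ₁ ≤ |φ i - Matrix.vecMul ψ Θ i|) →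
      (∀ i, |φ i| ≤ τ₂⁻¹) →
      ∀ ω : Fin d → ℤ, ∃ j, δ ≤ |Matrix.vecMul φ L j - (ω j : ℝ)| := by
  set K := {φ : Fin m → ℝ |
    (∀ ψ : Fin u → ℝ, ∃ i, τ₁ ≤ |φ i - vecMul ψ Θ i|) ∧ ∀ i, |φ i| ≤ τ₂⁻¹}
  have hK : IsCompact K := isCompact_setOf_forall_exists_le_abs_sub_and_abs_le _ _ _
  have hdisj : Disjoint ((vecMul · L) '' K) (integerPoints (Fin d)) := by
    refine disjoint_left.2 ?_
    rintro _ ⟨φ, ⟨hφ, -⟩, rfl⟩ hφL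
    obtain ⟨ψ, hψ⟩ := mem_range_vecMulLinear_of_vecMul_mem_integerPoints hΘ hint hmax hφL
    obtain ⟨i, hi⟩ := hφ ψ
    rw [← hψ, vecMulLinear_apply, sub_self, abs_zero] at hi
    linarith
  obtain ⟨δ, hδ, hsep⟩ := exists_pos_forall_lt_dist (hK.image (by fun_prop))
    (isClosed_integerPoints _) hdisj
  exact ⟨δ, hδ, fun φ hφ₁ hφ₂ ω => exists_le_abs_sub_of_lt_dist hδ <|
    hsep _ (mem_image_of_mem _ ⟨hφ₁, hφ₂⟩) _ fun j _ => ⟨ω j, rfl⟩⟩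

theorem stmt_3 (m d u : ℕ) (hd : m + 1 ≤ d) (hu : u + 1 ≤ m)
    (L : Matrix (Fin m) (Fin d) ℝ) (hL : Function.Surjective L.mulVec)
    (Θ : Matrix (Fin u) (Fin m) ℝ) (hΘ : Function.Surjective Θ.mulVec)
    (hint : ∀ x : Fin d → ℤ, ∀ i, ∃ z : ℤ,
      Θ.mulVec (L.mulVec (fun j => (x j : ℝ))) i = z)
    (hmax : ∀ u' : ℕ, ∀ Θ' : Matrix (Fin u') (Fin m) ℝ,
      Function.Surjective Θ'.mulVec →
      (∀ x : Fin d → ℤ, ∀ i, ∃ z : ℤ,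
        Θ'.mulVec (L.mulVec (fun j => (x j : ℝ))) i = z) → u' ≤ u)
    (τ₁ τ₂ : ℝ) (hτ₁ : 0 < τ₁) (hτ₁' : τ₁ ≤ 1) (hτ₂ : 0 < τ₂) (hτ₂' : τ₂ ≤ 1) :
    ∃ δ > (0 : ℝ), ∀ φ : Fin m → ℝ,
      (∀ ψ : Fin u → ℝ, ∃ i, τ₁ ≤ |φ i - Matrix.vecMul ψ Θ i|) →
      (∀ i, |φ i| ≤ τ₂⁻¹) →
      ∀ ω : Fin d → ℤ, ∃ j, δ ≤ |Matrix.vecMul φ L j - (ω j : ℝ)| :=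
  stmt_3_general m d u L Θ hΘ hint hmax τ₁ τ₂ hτ₁
end

section
/- Let m, d be natural numbers with d ≥ m+1, and let c, C > 0. Let L be an m-by-d real matrix with all entries bounded in absolute value by C, and suppose every m-by-d matrix within ℓ^∞-distance c of L has rank m. Then there exists an m-by-m submatrix M of L (obtained by selecting m columns) such that |det M| ≥ δ for some δ > 0 depending only on m, d, c, C. -/
/-!
Let `S` be the set of admissible matrices `L`. Its closure is compact (entries stay
in `[-C, C]`) and still consists of rank-`m` matrices, since each of its points lies within `c` of
some `L ∈ S`. So the continuous function `A ↦ ∑_g |det (A.submatrix id g)|`, summed over all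
`g : Fin m → Fin d`, is positive on the closure and has a positive minimum `μ` there; by
pigeonhole some `g` has `|det| ≥ μ / d ^ m`, and a nonzero minor forces `g` to be injective.
-/

open Matrix

theorem IsCompact.exists_pos_le {X : Type*} [TopologicalSpace X] {K : Set X} (hK : IsCompact K)
    {f : X → ℝ} (hf : ContinuousOn f K) (hpos : ∀ x ∈ K, 0 < f x) :
    ∃ δ > 0, ∀ x ∈ K, δ ≤ f x := by
  rcases K.eq_empty_or_nonempty with rfl | hne
  · exact ⟨1, one_pos, by simp⟩
  obtain ⟨x₀, hx₀, hmin⟩ := hK.exists_isMinOn hne hf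
  exact ⟨f x₀, hpos x₀ hx₀, hmin⟩

theorem Matrix.exists_det_submatrix_ne_zero_of_rank_eq {K n : Type*} [Field K] [Fintype n]
    {m : ℕ} (A : Matrix (Fin m) n K) (hA : A.rank = m) :
    ∃ g : Fin m → n, (A.submatrix id g).det ≠ 0 := by
  have hcols := Submodule.exists_fun_fin_finrank_span_eq K (Set.range A.col)
  rw [← rank_eq_finrank_span_cols, hA] at hcols
  obtain ⟨f, hf, -, hli⟩ := hcols
  choose g hg using hf
  have hcol : (A.submatrix id g).col = f := funext fun k => hg k
  refine ⟨g, ?_⟩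
  rw [← isUnit_iff_ne_zero, ← isUnit_iff_isUnit_det, ← linearIndependent_cols_iff_isUnit,
    hcol]
  exact hli

theorem Matrix.injective_of_det_submatrix_ne_zero {R m n : Type*} [CommRing R] [Fintype m]
    [DecidableEq m] {A : Matrix m n R} {g : m → n} (h : (A.submatrix id g).det ≠ 0) :
    Function.Injective g := by
  intro k l hkl
  by_contra hne
  exact h (det_zero_of_column_eq hne fun i => by simp [hkl])

theorem Matrix.isCompact_setOf_abs_le {m n : Type*} [Fintype m] [Fintype n] (C : ℝ) :
    IsCompact {A : Matrix m n ℝ | ∀ i j, |A i j| ≤ C} := by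
  have hbox : {A : Matrix m n ℝ | ∀ i j, |A i j| ≤ C} =
      Set.univ.pi fun _ => Set.univ.pi fun _ => Set.Icc (-C) C := by
    ext A
    show _ ↔ ∀ i ∈ Set.univ, ∀ j ∈ Set.univ, A i j ∈ Set.Icc (-C) C
    simp only [Set.mem_ofPred_eq, Set.mem_univ, true_imp_iff, Set.mem_Icc, abs_le]
  rw [hbox]
  exact isCompact_univ_pi fun _ => isCompact_univ_pi fun _ => isCompact_Icc

theorem Matrix.isOpen_setOf_abs_sub_lt {m n : Type*} [Fintype m] [Fintype n]
    (A : Matrix m n ℝ) (c : ℝ) :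
    IsOpen {B : Matrix m n ℝ | ∀ i j, |A i j - B i j| < c} := by
  simp only [Set.ofPred_forall]
  exact isOpen_iInter_of_finite fun i => isOpen_iInter_of_finite fun j =>
    isOpen_lt (by fun_prop) continuous_const

theorem Matrix.exists_abs_sub_lt_of_mem_closure {m n : Type*} [Fintype m] [Fintype n]
    {S : Set (Matrix m n ℝ)} {A : Matrix m n ℝ} (hA : A ∈ closure S) {c : ℝ} (hc : 0 < c) :
    ∃ L ∈ S, ∀ i j, |L i j - A i j| < c := by
  obtain ⟨L, hAL, hLS⟩ :=
    mem_closure_iff.mp hA _ (isOpen_setOf_abs_sub_lt A c) fun _ _ => by simpa using hc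
  exact ⟨L, hLS, fun i j => abs_sub_comm (L i j) (A i j) ▸ hAL i j⟩

theorem stmt_4_general (m d : ℕ) (hd : m + 1 ≤ d) (c C : ℝ) (hc : 0 < c) :
    ∃ δ > (0 : ℝ), ∀ L : Matrix (Fin m) (Fin d) ℝ,
      (∀ i j, |L i j| ≤ C) →
      (∀ L' : Matrix (Fin m) (Fin d) ℝ, (∀ i j, |L i j - L' i j| < c) → L'.rank = m) →
      ∃ g : Fin m → Fin d, Function.Injective g ∧ δ ≤ |(L.submatrix id g).det| := by
  set S := {L : Matrix (Fin m) (Fin d) ℝ | (∀ i j, |L i j| ≤ C) ∧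
    ∀ L' : Matrix (Fin m) (Fin d) ℝ, (∀ i j, |L i j - L' i j| < c) → L'.rank = m}
  set F := fun A : Matrix (Fin m) (Fin d) ℝ => ∑ g : Fin m → Fin d, |(A.submatrix id g).det|
  have hS : IsCompact (closure S) := (isCompact_setOf_abs_le C).closure_of_subset fun L hL => hL.1
  have hF : ∀ A ∈ closure S, 0 < F A := by
    intro A hA
    obtain ⟨L, hLS, hLA⟩ := exists_abs_sub_lt_of_mem_closure hA hc
    obtain ⟨g, hg⟩ := exists_det_submatrix_ne_zero_of_rank_eq A (hLS.2 A hLA)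
    exact (abs_pos.2 hg).trans_le <| Finset.single_le_sum
      (f := fun g => |(A.submatrix id g).det|) (fun g _ => abs_nonneg _) (Finset.mem_univ g)
  obtain ⟨μ, hμ, hμF⟩ := hS.exists_pos_le (by fun_prop) hF
  have : Nonempty (Fin d) := ⟨⟨0, by omega⟩⟩
  set N := Fintype.card (Fin m → Fin d)
  have hN : (0 : ℝ) < N := mod_cast Fintype.card_pos
  refine ⟨μ / N, div_pos hμ hN, fun L hLC hLr => ?_⟩
  have hsum : ∑ _g : Fin m → Fin d, μ / N ≤ F L := by
    rw [Finset.sum_const, Finset.card_univ, nsmul_eq_mul, mul_div_cancel₀ _ hN.ne']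
    exact hμF L (subset_closure ⟨hLC, hLr⟩)
  obtain ⟨g, -, hg⟩ := Finset.exists_le_of_sum_le Finset.univ_nonempty hsum
  exact ⟨g, injective_of_det_submatrix_ne_zero (abs_pos.1 ((div_pos hμ hN).trans_le hg)), hg⟩

theorem stmt_4 (m d : ℕ) (hd : m + 1 ≤ d) (c C : ℝ) (hc : 0 < c) (hC : 0 < C) :
    ∃ δ > (0 : ℝ), ∀ L : Matrix (Fin m) (Fin d) ℝ,
      (∀ i j, |L i j| ≤ C) →
      (∀ L' : Matrix (Fin m) (Fin d) ℝ, (∀ i j, |L i j - L' i j| < c) → L'.rank = m) →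
      ∃ g : Fin m → Fin d, Function.Injective g ∧ δ ≤ |(L.submatrix id g).det| :=
  stmt_4_general m d hd c C hc
end

section
/- Let u, d be natural numbers with d ≥ u+1, and let S : ℝ^d → ℝ^u be a surjective linear map with S(ℤ^d) ⊆ ℤ^u and with all matrix entries bounded by C in absolute value. Then S(ℤ^d) is a full-rank sublattice of ℤ^u, and there exists a basis a₁, …, a_u ∈ ℤ^u of the lattice S(ℤ^d) with ‖a_i‖_∞ bounded by a constant depending only on u, d, C, together with vectors x₁, …, x_u ∈ ℤ^d such that S(x_i) = a_i and ‖x_i‖_∞ bounded by a constant depending only on u, d, C. -/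
/-!
A real matrix `S` sending `ℤ^d` into `ℤ^u` has integer entries, so once they are bounded by `C`
only finitely many matrices `S` remain, and it suffices to find a bound for each one separately.
For a single `S`, the lattice `S(ℤ^d) ⊆ ℤ^u` is free, and it spans `ℝ^u` because `S` is
surjective, so it has rank `u`; any `ℤ`-basis of it, with chosen integer preimages, does the job.
-/

open Function Matrix Submodule Filter

theorem Module.finrank_le_finrank_of_span_range_eq_top {R A M V : Type*} [CommRing R] [Ring A]
    [Algebra R A] [StrongRankCondition R] [StrongRankCondition A]
    [AddCommGroup M] [Module R M] [Module.Free R M] [Module.Finite R M]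
    [AddCommGroup V] [Module R V] [Module A V] [IsScalarTower R A V]
    (f : M →ₗ[R] V) (hf : span A (LinearMap.range f : Set V) = ⊤) :
    Module.finrank A V ≤ Module.finrank R M := by
  let b := Module.Free.chooseBasis R M
  have hrange : (LinearMap.range f : Set V) ⊆ span A (Set.range (f ∘ b)) := by
    rw [LinearMap.range_eq_map, ← b.span_eq, Submodule.map_span, ← Set.range_comp]
    exact span_le_restrictScalars R A _
  have htop : span A (Set.range (f ∘ b)) = ⊤ := eq_top_iff.2 (hf ▸ span_le.2 hrange)
  calc Module.finrank A V = Module.finrank A (span A (Set.range (f ∘ b))) := by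
        rw [htop, finrank_top]
    _ ≤ Fintype.card _ := finrank_range_le_card _
    _ = Module.finrank R M := (Module.finrank_eq_card_chooseBasisIndex R M).symm

theorem eventually_forall_abs_le {ι κ : Type*} [Finite ι] [Finite κ] (f : ι → κ → ℝ) :
    ∀ᶠ K in atTop, ∀ i j, |f i j| ≤ K :=
  eventually_all.2 fun _ => eventually_all.2 fun _ => eventually_ge_atTop _

namespace Matrix

variable {m n : Type*} [Fintype n]

theorem finite_setOf_forall_abs_le [Fintype m] (M : ℤ) :
    {T : Matrix m n ℤ | ∀ i j, |T i j| ≤ M}.Finite := by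
  classical
  exact (Set.finite_Icc (-fun _ _ => M : m → n → ℤ) fun _ _ => M).subset fun _ hT =>
    ⟨fun i j => (abs_le.1 (hT i j)).1, fun i j => (abs_le.1 (hT i j)).2⟩

theorem map_intCast_mulVec (T : Matrix m n ℤ) (x : n → ℤ) :
    T.map (Int.cast : ℤ → ℝ) *ᵥ (fun j => (x j : ℝ)) = fun i => ((T *ᵥ x) i : ℝ) :=
  funext fun i => ((Int.castRingHom ℝ).map_mulVec T x i).symm

theorem exists_map_intCast_eq (S : Matrix m n ℝ)
    (hS : ∀ x : n → ℤ, ∀ i, ∃ z : ℤ, S.mulVec (fun j => (x j : ℝ)) i = z) :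
    ∃ T : Matrix m n ℤ, T.map (Int.cast : ℤ → ℝ) = S := by
  classical
  choose T hT using hS
  refine ⟨of fun i j => T (Pi.single j 1) i, ?_⟩
  ext i j
  simpa [Pi.single_apply, mulVec, dotProduct] using (hT (Pi.single j 1) i).symm

theorem span_mulVec_intCast_eq_top (S : Matrix m n ℝ) (hS : Surjective S.mulVec) :
    span ℝ {v | ∃ x : n → ℤ, S *ᵥ (fun j => (x j : ℝ)) = v} = ⊤ := by
  classical
  have hint : span ℝ (Set.range fun x : n → ℤ => fun j => (x j : ℝ)) = ⊤ :=
    eq_top_iff.2 <| (Pi.basisFun ℝ n).span_eq.ge.trans <| span_mono <| by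
      rintro _ ⟨j, rfl⟩
      exact ⟨Pi.single j 1, by ext k; simp [Pi.single_apply]⟩
  have himage : {v | ∃ x : n → ℤ, S *ᵥ (fun j => (x j : ℝ)) = v}
      = S.mulVecLin '' Set.range fun x : n → ℤ => fun j => (x j : ℝ) := by
    ext v; simp
  rw [himage, span_image, hint, Submodule.map_top, LinearMap.range_eq_top]
  exact hS

theorem rank_eq_card_of_surjective_map_intCast [Fintype m] (T : Matrix m n ℤ)
    (hT : Surjective (T.map (Int.cast : ℤ → ℝ)).mulVec) : T.rank = Fintype.card m := by
  refine le_antisymm T.rank_le_card_height ?_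
  let castL : (m → ℤ) →ₗ[ℤ] m → ℝ := (Int.castAddHom ℝ).toIntLinearMap.compLeft m
  have hspan : span ℝ (LinearMap.range (castL ∘ₗ (LinearMap.range T.mulVecLin).subtype) :
      Set (m → ℝ)) = ⊤ := by
    convert span_mulVec_intCast_eq_top _ hT using 2
    ext v
    constructor
    · rintro ⟨⟨_, x, rfl⟩, rfl⟩
      exact ⟨x, map_intCast_mulVec T x⟩
    · rintro ⟨x, rfl⟩
      exact ⟨⟨T *ᵥ x, x, rfl⟩, (map_intCast_mulVec T x).symm⟩
  simpa [Matrix.rank] using Module.finrank_le_finrank_of_span_range_eq_top _ hspan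

end Matrix

def HasBoundedLatticeBasis {u d : ℕ} (S : Matrix (Fin u) (Fin d) ℝ) (K : ℝ) : Prop :=
  ∃ a : Fin u → Fin u → ℤ, ∃ xv : Fin u → Fin d → ℤ,
    (∀ i j, |(a i j : ℝ)| ≤ K) ∧ (∀ i j, |(xv i j : ℝ)| ≤ K) ∧
    (∀ i, S.mulVec (fun j => (xv i j : ℝ)) = fun j => (a i j : ℝ)) ∧
    (∀ x : Fin d → ℤ, ∃! cvec : Fin u → ℤ,
      S.mulVec (fun j => (x j : ℝ)) = fun i => ∑ t, (cvec t : ℝ) * (a t i : ℝ))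

theorem eventually_hasBoundedLatticeBasis {u d : ℕ} (T : Matrix (Fin u) (Fin d) ℤ)
    (hT : Surjective (T.map (Int.cast : ℤ → ℝ)).mulVec) :
    ∀ᶠ K in atTop, HasBoundedLatticeBasis (T.map (Int.cast : ℤ → ℝ)) K := by
  let b := Module.finBasisOfFinrankEq ℤ (LinearMap.range T.mulVecLin)
    (by simpa [Matrix.rank] using T.rank_eq_card_of_surjective_map_intCast hT)
  let a i := (b i : Fin u → ℤ)
  choose xv hxv using fun i => (b i).2
  filter_upwards [eventually_forall_abs_le fun i j => (a i j : ℝ),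
    eventually_forall_abs_le fun i j => (xv i j : ℝ)] with K ha hxvK
  refine ⟨a, xv, ha, hxvK, fun i => ?_, fun x => ?_⟩
  · simp [map_intCast_mulVec, ← hxv i, a]
  · have hcoeff : ∀ c : Fin u → ℤ,
        ((fun i => ((T *ᵥ x) i : ℝ)) = fun i => ∑ t, (c t : ℝ) * (a t i : ℝ)) ↔
          b.equivFun.symm c = ⟨T *ᵥ x, x, rfl⟩ := by
      intro c
      simp only [funext_iff, Module.Basis.equivFun_symm_apply, Subtype.ext_iff,
        AddSubmonoidClass.coe_finsetSum, SetLike.val_smul, zsmul_eq_mul, Finset.sum_apply,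
        Pi.mul_apply, Pi.intCast_apply, Int.cast_eq, a]
      norm_cast
      exact forall_congr' fun _ => eq_comm
    simp_rw [map_intCast_mulVec, hcoeff]
    exact b.equivFun.symm.bijective.existsUnique _

theorem stmt_6_general (u d : ℕ) (C : ℝ) :
    ∃ K > (0 : ℝ), ∀ S : Matrix (Fin u) (Fin d) ℝ,
      Function.Surjective S.mulVec →
      (∀ i j, |S i j| ≤ C) →
      (∀ x : Fin d → ℤ, ∀ i, ∃ z : ℤ, S.mulVec (fun j => (x j : ℝ)) i = z) →
      Submodule.span ℝ
          {v : Fin u → ℝ | ∃ x : Fin d → ℤ, S.mulVec (fun j => (x j : ℝ)) = v} = ⊤ ∧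
      ∃ a : Fin u → Fin u → ℤ, ∃ xv : Fin u → Fin d → ℤ,
        (∀ i j, |(a i j : ℝ)| ≤ K) ∧ (∀ i j, |(xv i j : ℝ)| ≤ K) ∧
        (∀ i, S.mulVec (fun j => (xv i j : ℝ)) = fun j => (a i j : ℝ)) ∧
        (∀ x : Fin d → ℤ, ∃! cvec : Fin u → ℤ,
          S.mulVec (fun j => (x j : ℝ)) = fun i => ∑ t, (cvec t : ℝ) * (a t i : ℝ)) := by
  let s := {T : Matrix (Fin u) (Fin d) ℤ | (∀ i j, |T i j| ≤ ⌊C⌋) ∧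
    Surjective (T.map (Int.cast : ℤ → ℝ)).mulVec}
  have hs : s.Finite := (finite_setOf_forall_abs_le ⌊C⌋).subset fun _ hT => hT.1
  obtain ⟨K, hK, hKs⟩ := ((eventually_gt_atTop 0).and
    (hs.eventually_all.2 fun T hT => eventually_hasBoundedLatticeBasis T hT.2)).exists
  refine ⟨K, hK, fun S hsurj hbound hint => ?_⟩
  obtain ⟨T, rfl⟩ := exists_map_intCast_eq S hint
  have hTbound : ∀ i j, |T i j| ≤ ⌊C⌋ := fun i j =>
    Int.le_floor.2 (by simpa using hbound i j)
  exact ⟨span_mulVec_intCast_eq_top _ hsurj, hKs T ⟨hTbound, hsurj⟩⟩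

theorem stmt_6 (u d : ℕ) (hd : u + 1 ≤ d) (C : ℝ) (hC : 0 < C) :
    ∃ K > (0 : ℝ), ∀ S : Matrix (Fin u) (Fin d) ℝ,
      Function.Surjective S.mulVec →
      (∀ i j, |S i j| ≤ C) →
      (∀ x : Fin d → ℤ, ∀ i, ∃ z : ℤ, S.mulVec (fun j => (x j : ℝ)) i = z) →
      Submodule.span ℝ
          {v : Fin u → ℝ | ∃ x : Fin d → ℤ, S.mulVec (fun j => (x j : ℝ)) = v} = ⊤ ∧
      ∃ a : Fin u → Fin u → ℤ, ∃ xv : Fin u → Fin d → ℤ,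
        (∀ i j, |(a i j : ℝ)| ≤ K) ∧ (∀ i j, |(xv i j : ℝ)| ≤ K) ∧
        (∀ i, S.mulVec (fun j => (xv i j : ℝ)) = fun j => (a i j : ℝ)) ∧
        (∀ x : Fin d → ℤ, ∃! cvec : Fin u → ℤ,
          S.mulVec (fun j => (x j : ℝ)) = fun i => ∑ t, (cvec t : ℝ) * (a t i : ℝ)) :=
  stmt_6_general u d C
end

section
/- Let m, d be natural numbers with d ≥ m+2, and let L be an m-by-(m+2) real matrix of rank m. Then there exists a nonzero vector in the row space of L having at most two nonzero coordinates if and only if some m-by-m submatrix of L has determinant zero. -/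
/-!
A nonzero vector `a ᵥ* L` of the row space vanishes on the `m` columns selected by `g` exactly
when `a ᵥ* (L.submatrix id g) = 0`, i.e. when that `m × m` minor is singular. Since `L` has
full row rank, `a ≠ 0` is the same as `a ᵥ* L ≠ 0`; and among `m + 2` columns, "vanishing
outside two positions" and "vanishing on `m` selected columns" say the same thing.
-/

open Function

section Combinatorics

variable {α : Type*} [Fintype α]

theorem exists_embedding_fin_avoiding_pair [DecidableEq α] {m : ℕ}
    (hcard : m + 2 ≤ Fintype.card α) (i j : α) :
    ∃ g : Fin m ↪ α, ∀ l, g l ≠ i ∧ g l ≠ j := by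
  set s : Finset α := {i, j}ᶜ
  have hs : m ≤ Fintype.card s := by
    have : ({i, j} : Finset α).card ≤ 2 := Finset.card_le_two
    rw [Fintype.card_coe, Finset.card_compl]
    omega
  obtain ⟨e⟩ : Nonempty (Fin m ↪ s) := Embedding.nonempty_of_card_le (by simpa using hs)
  refine ⟨e.trans (Embedding.subtype _), fun l => ?_⟩
  have hl := (e l).2
  simp only [s, Finset.mem_compl, Finset.mem_insert, Finset.mem_singleton, not_or] at hl
  exact hl

theorem exists_pair_forall_mem_range_of_injective {m : ℕ} (hcard : Fintype.card α = m + 2)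
    {g : Fin m → α} (hg : Injective g) :
    ∃ i j : α, ∀ k, k ≠ i → k ≠ j → k ∈ Set.range g := by
  classical
  have hcompl : (Finset.univ.image g)ᶜ.card = 2 := by
    rw [Finset.card_compl, Finset.card_image_of_injective _ hg]
    simp [hcard]
  obtain ⟨i, j, -, hij⟩ := Finset.card_eq_two.mp hcompl
  refine ⟨i, j, fun k hki hkj => ?_⟩
  by_contra hk
  have : k ∈ (Finset.univ.image g)ᶜ := by simpa using hk
  simp [hij, hki, hkj] at this

end Combinatorics

namespace Matrix

theorem vecMul_submatrix_id {R m n l : Type*} [NonUnitalNonAssocSemiring R] [Fintype m]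
    (a : m → R) (M : Matrix m n R) (g : l → n) :
    a ᵥ* M.submatrix id g = (a ᵥ* M) ∘ g :=
  rfl

variable {K m n : Type*} [Field K] [Fintype m]

theorem linearIndependent_row_of_rank_eq_card [Fintype n] {M : Matrix m n K}
    (h : M.rank = Fintype.card m) : LinearIndependent K M.row := by
  rw [linearIndependent_iff_card_eq_finrank_span, Set.finrank, ← rank_eq_finrank_span_row, h]

theorem vecMul_injective_of_rank_eq_card [Fintype n] {M : Matrix m n K}
    (h : M.rank = Fintype.card m) : Injective M.vecMul :=
  vecMul_injective_iff.mpr (linearIndependent_row_of_rank_eq_card h)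

theorem det_submatrix_id_eq_zero_iff [DecidableEq m] (M : Matrix m n K) (g : m → n) :
    (M.submatrix id g).det = 0 ↔ ∃ a ≠ 0, ∀ l, (a ᵥ* M) (g l) = 0 := by
  simp only [← exists_vecMul_eq_zero_iff, vecMul_submatrix_id, funext_iff, Function.comp_apply,
    Pi.zero_apply]

end Matrix

theorem stmt_11 (m : ℕ) (L : Matrix (Fin m) (Fin (m + 2)) ℝ) (hL : L.rank = m) :
    (∃ v : Fin (m + 2) → ℝ, v ≠ 0 ∧ (∃ a : Fin m → ℝ, v = Matrix.vecMul a L) ∧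
      ∃ i j : Fin (m + 2), ∀ k, k ≠ i → k ≠ j → v k = 0) ↔
    ∃ g : Fin m → Fin (m + 2), Function.Injective g ∧ (L.submatrix id g).det = 0 := by
  constructor
  · rintro ⟨v, hv, ⟨a, rfl⟩, i, j, hvij⟩
    have ha : a ≠ 0 := by
      rintro rfl
      exact hv (Matrix.zero_vecMul L)
    obtain ⟨g, hg⟩ := exists_embedding_fin_avoiding_pair (m := m) (by simp) i j
    exact ⟨g, g.injective, (L.det_submatrix_id_eq_zero_iff g).mpr
      ⟨a, ha, fun l => hvij _ (hg l).1 (hg l).2⟩⟩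
  · rintro ⟨g, hg, hdet⟩
    obtain ⟨a, ha, hag⟩ := (L.det_submatrix_id_eq_zero_iff g).mp hdet
    have hinj := Matrix.vecMul_injective_of_rank_eq_card (hL.trans (Fintype.card_fin m).symm)
    obtain ⟨i, j, hij⟩ := exists_pair_forall_mem_range_of_injective (Fintype.card_fin (m + 2)) hg
    refine ⟨Matrix.vecMul a L, fun h => ha (hinj (h.trans (Matrix.zero_vecMul L).symm)), ⟨a, rfl⟩,
      i, j, fun k hki hkj => ?_⟩
    obtain ⟨l, rfl⟩ := hij k hki hkj
    exact hag l
end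

section
/- Let s be a natural number and let η > 0 be sufficiently small in terms of s. Let χ : ℝ → [0,1] be a measurable function supported on [−η, η] with χ(x) = 1 for |x| ≤ η/2. Let N be a natural number and f : {1,…,N} → ℝ arbitrary, and define (f ∗ χ)(x) = Σ_{n ∈ ℤ} f(n) χ(x − n), viewed as a function supported on [−2N, 2N]. Then ‖f ∗ χ‖_{U^{s+1}(ℝ, 2N)} ≤ K · η^{(s+2)/2^{s+1}} · ‖f‖_{U^{s+1}[N]}, where K depends only on s. -/
/-!
For `η` small compared with `1 / s`, each vertex `x + h · ω` of a real parallelepiped lies within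
`η` of at most one integer, and whenever the cutoffs at the vertices `x` and `x + hᵢ` are nonzero,
these integers themselves form an integer parallelepiped `n + m · ω`. Hence
`∏_ω (f ∗ χ)(x + h · ω) = ∑_{(n, m)} ∏_ω f(n + m · ω) · ∏_ω χ((x - n) + (h - m) · ω)`,
and integrating over `(x, h)` by translation invariance gives
`‖f ∗ χ‖_{U^{s+1}(ℝ, 2N)}^{2^{s+1}} = 2^{-(s+2)} (∫ ∏_ω χ(x + h · ω)) ‖f‖_{U^{s+1}[N]}^{2^{s+1}}`.
The remaining integral is at most the volume `2η (4η)^{s+1}` of a box containing its support.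
-/

open MeasureTheory

noncomputable def realGowersPow (s : ℕ) (N : ℝ) (g : ℝ → ℝ) : ℝ :=
  (1 / N ^ (s + 2)) *
    ∫ z : ℝ × (Fin (s + 1) → ℝ),
      ∏ ω : Fin (s + 1) → Bool, g (z.1 + ∑ i, if ω i then z.2 i else 0)

noncomputable def realGowersNorm (s : ℕ) (N : ℝ) (g : ℝ → ℝ) : ℝ :=
  realGowersPow s N g ^ ((1 : ℝ) / 2 ^ (s + 1))

noncomputable def discreteGowersPow (s : ℕ) (N : ℝ) (f : ℤ → ℝ) : ℝ :=
  (1 / N ^ (s + 2)) *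
    ∑' z : ℤ × (Fin (s + 1) → ℤ),
      ∏ ω : Fin (s + 1) → Bool, f (z.1 + ∑ i, if ω i then z.2 i else 0)

noncomputable def discreteGowersNorm (s : ℕ) (N : ℝ) (f : ℤ → ℝ) : ℝ :=
  discreteGowersPow s N f ^ ((1 : ℝ) / 2 ^ (s + 1))

noncomputable def convZ (f : ℤ → ℝ) (χ : ℝ → ℝ) (x : ℝ) : ℝ := ∑' n : ℤ, f n * χ (x - n)

open Finset
open scoped Pointwise

section Cube

variable {α R : Type*} {d : ℕ}

def cubePoint [AddCommMonoid α] (z : α × (Fin d → α)) (ω : Fin d → Bool) : α :=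
  z.1 + ∑ i, if ω i then z.2 i else 0

def cubeProd [AddCommMonoid α] [CommMonoid R] (g : α → R) (z : α × (Fin d → α)) : R :=
  ∏ ω, g (cubePoint z ω)

section AddCommMonoid

variable [AddCommMonoid α]

lemma cubePoint_false (z : α × (Fin d → α)) : cubePoint z (fun _ => false) = z.1 := by
  simp [cubePoint]

lemma cubePoint_single (z : α × (Fin d → α)) (i : Fin d) :
    cubePoint z (fun j => decide (j = i)) = z.1 + z.2 i := by
  simp [cubePoint]

variable [CommMonoidWithZero R] {g : α → R} {z : α × (Fin d → α)}

lemma ne_zero_of_cubeProd_ne_zero (h : cubeProd g z ≠ 0) (ω : Fin d → Bool) :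
    g (cubePoint z ω) ≠ 0 :=
  fun h0 => h (prod_eq_zero (mem_univ ω) h0)

lemma mem_of_cubeProd_ne_zero {S : Set α} (hg : ∀ x, g x ≠ 0 → x ∈ S) (h : cubeProd g z ≠ 0) :
    z.1 ∈ S ∧ ∀ i, z.1 + z.2 i ∈ S :=
  ⟨cubePoint_false z ▸ hg _ (ne_zero_of_cubeProd_ne_zero h _),
    fun i => cubePoint_single z i ▸ hg _ (ne_zero_of_cubeProd_ne_zero h _)⟩

lemma cubeProd_nonneg [Preorder R] [ZeroLEOneClass R] [PosMulMono R] (hg : ∀ x, 0 ≤ g x)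
    (z : α × (Fin d → α)) : 0 ≤ cubeProd g z :=
  prod_nonneg fun _ _ => hg _

end AddCommMonoid

lemma cubePoint_sub [AddCommGroup α] (z w : α × (Fin d → α)) (ω : Fin d → Bool) :
    cubePoint (z - w) ω = cubePoint z ω - cubePoint w ω := by
  simp only [cubePoint, Prod.fst_sub, Prod.snd_sub, Pi.sub_apply]
  rw [add_sub_add_comm, ← sum_sub_distrib]
  congr 1
  refine sum_congr rfl fun i _ => ?_
  split_ifs <;> simp

lemma cubeProd_eq_zero_of_notMem [AddCommGroup α] [DecidableEq α] [CommMonoidWithZero R]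
    {f : α → R} {A : Finset α} (hf : ∀ x ∉ A, f x = 0) {c : α × (Fin d → α)}
    (hc : c ∉ A ×ˢ Fintype.piFinset fun _ => A - A) : cubeProd f c = 0 := by
  by_contra h
  obtain ⟨h0, hi⟩ := mem_of_cubeProd_ne_zero (S := A) (fun x => not_imp_comm.1 (hf x)) h
  exact hc (mem_product.2 ⟨h0, Fintype.mem_piFinset.2 fun i =>
    mem_sub.2 ⟨_, hi i, _, h0, add_sub_cancel_left _ _⟩⟩)

end Cube

section Lattice

variable {d : ℕ}

def latticeCast (c : ℤ × (Fin d → ℤ)) : ℝ × (Fin d → ℝ) := (c.1, fun i => c.2 i)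

lemma Int.cast_cubePoint (c : ℤ × (Fin d → ℤ)) (ω : Fin d → Bool) :
    ((cubePoint c ω : ℤ) : ℝ) = cubePoint (latticeCast c) ω := by
  simp [cubePoint, latticeCast, apply_ite]

lemma Int.eq_of_abs_sub_le {y r r' : ℝ} {a b : ℤ} (ha : |y - a| ≤ r) (hb : |y - b| ≤ r')
    (h : r + r' < 1) : a = b := by
  by_contra hab
  have h1 : (1 : ℝ) ≤ |(a : ℝ) - b| := by exact_mod_cast Int.one_le_abs (sub_ne_zero.2 hab)
  have h2 : |(a : ℝ) - b| ≤ |y - b| + |y - a| := by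
    rw [show (a : ℝ) - b = (y - b) - (y - a) by ring]
    exact abs_sub _ _
  linarith

end Lattice

section Convolution

variable {d : ℕ} {η : ℝ} {χ : ℝ → ℝ} {f : ℤ → ℝ}

def cubeNbhd (d : ℕ) (η : ℝ) : Set (ℝ × (Fin d → ℝ)) :=
  {w | |w.1| ≤ η ∧ ∀ i, |w.1 + w.2 i| ≤ η}

lemma sub_latticeCast_mem_cubeNbhd {z : ℝ × (Fin d → ℝ)} {c : ℤ × (Fin d → ℤ)} :
    z - latticeCast c ∈ cubeNbhd d η ↔
      |z.1 - c.1| ≤ η ∧ ∀ i, |z.1 + z.2 i - ((c.1 + c.2 i : ℤ) : ℝ)| ≤ η := by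
  have h (i : Fin d) : z.1 - c.1 + (z.2 i - c.2 i) = z.1 + z.2 i - ((c.1 + c.2 i : ℤ) : ℝ) := by
    push_cast; ring
  simp only [cubeNbhd, latticeCast, Set.mem_ofPred_eq, Prod.fst_sub, Prod.snd_sub, Pi.sub_apply, h]

lemma cubeProd_eq_zero_of_notMem_cubeNbhd (hsupp : ∀ x, η < |x| → χ x = 0)
    {w : ℝ × (Fin d → ℝ)} (hw : w ∉ cubeNbhd d η) : cubeProd χ w = 0 := by
  by_contra h
  exact hw (mem_of_cubeProd_ne_zero (S := {x | |x| ≤ η}) (fun x hx => not_lt.1 (mt (hsupp x) hx)) h)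

lemma abs_cubePoint_le {w : ℝ × (Fin d → ℝ)} (hw : w ∈ cubeNbhd d η) (ω : Fin d → Bool) :
    |cubePoint w ω| ≤ (2 * d + 1) * η := by
  have hi (i : Fin d) : |if ω i then w.2 i else 0| ≤ 2 * η := by
    have h0 := (abs_nonneg w.1).trans hw.1
    split_ifs
    · calc |w.2 i| = |(w.1 + w.2 i) - w.1| := by rw [add_sub_cancel_left]
        _ ≤ |w.1 + w.2 i| + |w.1| := abs_sub _ _
        _ ≤ 2 * η := by linarith [hw.1, hw.2 i]
    · simpa using h0
  calc |cubePoint w ω| ≤ |w.1| + ∑ i, |if ω i then w.2 i else 0| :=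
        (abs_add_le _ _).trans (by gcongr; exact abs_sum_le_sum_abs _ _)
    _ ≤ η + ∑ _i : Fin d, 2 * η := add_le_add hw.1 (sum_le_sum fun i _ => hi i)
    _ = (2 * d + 1) * η := by
      rw [sum_const, card_univ, Fintype.card_fin, nsmul_eq_mul]
      ring

lemma exists_abs_sub_le_of_convZ_ne_zero (hsupp : ∀ x, η < |x| → χ x = 0) {y : ℝ}
    (h : convZ f χ y ≠ 0) : ∃ n : ℤ, |y - n| ≤ η := by
  by_contra! hfar
  exact h ((tsum_congr fun n => by rw [hsupp _ (hfar n), mul_zero]).trans tsum_zero)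

lemma convZ_intCast_add (hsupp : ∀ x, η < |x| → χ x = 0) (q : ℤ) {t : ℝ} (ht : |t| + η < 1) :
    convZ f χ (q + t) = f q * χ t := by
  rw [convZ, tsum_eq_single q fun j hj => ?_, add_sub_cancel_left]
  rw [hsupp _ (not_le.1 fun hle => hj ?_), mul_zero]
  exact Int.eq_of_abs_sub_le hle (by rw [add_sub_cancel_left]) (by linarith)

lemma cubeProd_convZ_of_mem (hsupp : ∀ x, η < |x| → χ x = 0) (hη : (2 * d + 2) * η < 1)
    {z : ℝ × (Fin d → ℝ)} {c : ℤ × (Fin d → ℤ)} (hc : z - latticeCast c ∈ cubeNbhd d η) :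
    cubeProd (convZ f χ) z = cubeProd f c * cubeProd χ (z - latticeCast c) := by
  rw [cubeProd, cubeProd, cubeProd, ← prod_mul_distrib]
  refine prod_congr rfl fun ω _ => ?_
  have hz : cubePoint z ω = cubePoint c ω + cubePoint (z - latticeCast c) ω := by
    rw [cubePoint_sub, Int.cast_cubePoint]; ring
  rw [hz]
  exact convZ_intCast_add hsupp _ (by linarith [abs_cubePoint_le hc ω])

lemma eq_of_sub_latticeCast_mem_cubeNbhd (hη : 2 * η < 1) {z : ℝ × (Fin d → ℝ)}
    {c c' : ℤ × (Fin d → ℤ)} (hc : z - latticeCast c ∈ cubeNbhd d η)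
    (hc' : z - latticeCast c' ∈ cubeNbhd d η) : c = c' := by
  rw [sub_latticeCast_mem_cubeNbhd] at hc hc'
  have h1 : c.1 = c'.1 := Int.eq_of_abs_sub_le hc.1 hc'.1 (by linarith)
  have h2 (i : Fin d) : c.1 + c.2 i = c'.1 + c'.2 i :=
    Int.eq_of_abs_sub_le (hc.2 i) (hc'.2 i) (by linarith)
  exact Prod.ext h1 (funext fun i => by have := h2 i; omega)

lemma exists_sub_latticeCast_mem_cubeNbhd (hsupp : ∀ x, η < |x| → χ x = 0)
    {z : ℝ × (Fin d → ℝ)} (h : cubeProd (convZ f χ) z ≠ 0) :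
    ∃ c : ℤ × (Fin d → ℤ), z - latticeCast c ∈ cubeNbhd d η := by
  obtain ⟨⟨n, hn⟩, hk⟩ := mem_of_cubeProd_ne_zero (g := convZ f χ)
    (S := {y | ∃ n : ℤ, |y - n| ≤ η}) (fun _ => exists_abs_sub_le_of_convZ_ne_zero hsupp) h
  choose k hk using hk
  exact ⟨(n, fun i => k i - n), sub_latticeCast_mem_cubeNbhd.2 ⟨hn, fun i => by simpa using hk i⟩⟩

lemma cubeProd_convZ_eq_sum (hsupp : ∀ x, η < |x| → χ x = 0) (hη : (2 * d + 2) * η < 1)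
    {T : Finset (ℤ × (Fin d → ℤ))} (hT : ∀ c ∉ T, cubeProd f c = 0) (z : ℝ × (Fin d → ℝ)) :
    cubeProd (convZ f χ) z = ∑ c ∈ T, cubeProd f c * cubeProd χ (z - latticeCast c) := by
  by_cases hnear : ∃ c : ℤ × (Fin d → ℤ), z - latticeCast c ∈ cubeNbhd d η
  · obtain ⟨c, hc⟩ := hnear
    have hη2 : 2 * η < 1 := by nlinarith [(abs_nonneg _).trans hc.1]
    rw [cubeProd_convZ_of_mem hsupp hη hc, eq_comm]
    refine sum_eq_single c (fun c' _ hne => ?_) (fun hcT => by rw [hT c hcT, zero_mul])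
    rw [cubeProd_eq_zero_of_notMem_cubeNbhd hsupp
      fun hc' => hne (eq_of_sub_latticeCast_mem_cubeNbhd hη2 hc' hc), mul_zero]
  · rw [not_ne_iff.1 (mt (exists_sub_latticeCast_mem_cubeNbhd hsupp) hnear), eq_comm]
    exact sum_eq_zero fun c _ => by
      rw [cubeProd_eq_zero_of_notMem_cubeNbhd hsupp (not_exists.1 hnear c), mul_zero]

end Convolution

section Integral

variable {d : ℕ} {η : ℝ} {χ : ℝ → ℝ}

lemma measurable_cubeProd (hχ : Measurable χ) :
    Measurable (cubeProd χ : ℝ × (Fin d → ℝ) → ℝ) :=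
  Finset.measurable_prod _ fun ω _ => hχ.comp <| Continuous.measurable <|
    continuous_fst.add <| continuous_finsetSum _ fun i _ =>
      continuous_if_const _ (fun _ => by fun_prop) (fun _ => by fun_prop)

def cubeBox (d : ℕ) (η : ℝ) : Set (ℝ × (Fin d → ℝ)) :=
  Set.Icc (-η) η ×ˢ Set.univ.pi fun _ => Set.Icc (-(2 * η)) (2 * η)

lemma cubeNbhd_subset_cubeBox : cubeNbhd d η ⊆ cubeBox d η := by
  intro w ⟨h0, hi⟩
  refine ⟨abs_le.1 h0, fun i _ => ?_⟩
  have h1 := abs_le.1 h0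
  have h2 := abs_le.1 (hi i)
  constructor <;> linarith [h1.1, h1.2, h2.1, h2.2]

lemma measureReal_cubeBox (hη : 0 ≤ η) : volume.real (cubeBox d η) = 2 * η * (4 * η) ^ d := by
  rw [measureReal_def, cubeBox, Measure.volume_eq_prod, Measure.prod_prod, volume_pi_pi]
  simp only [Real.volume_Icc, prod_const, card_univ, Fintype.card_fin]
  rw [ENNReal.toReal_mul, ENNReal.toReal_pow, ENNReal.toReal_ofReal (by linarith),
    ENNReal.toReal_ofReal (by linarith)]
  ring

lemma cubeProd_le_indicator_cubeBox (hχ01 : ∀ x, 0 ≤ χ x ∧ χ x ≤ 1)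
    (hsupp : ∀ x, η < |x| → χ x = 0) (w : ℝ × (Fin d → ℝ)) :
    cubeProd χ w ≤ (cubeBox d η).indicator 1 w := by
  by_cases hw : w ∈ cubeBox d η
  · rw [Set.indicator_of_mem hw]
    exact prod_le_one (fun ω _ => (hχ01 _).1) (fun ω _ => (hχ01 _).2)
  · rw [Set.indicator_of_notMem hw, cubeProd_eq_zero_of_notMem_cubeNbhd hsupp
      fun hw' => hw (cubeNbhd_subset_cubeBox hw')]

lemma measurableSet_cubeBox : MeasurableSet (cubeBox d η) :=
  measurableSet_Icc.prod (MeasurableSet.univ_pi fun _ => measurableSet_Icc)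

lemma integrable_indicator_cubeBox :
    Integrable ((cubeBox d η).indicator (1 : ℝ × (Fin d → ℝ) → ℝ)) :=
  (integrable_indicator_iff measurableSet_cubeBox).2 <| integrableOn_const <|
    (isCompact_Icc.prod (isCompact_univ_pi fun _ => isCompact_Icc)).measure_ne_top

lemma integrable_cubeProd (hχ : Measurable χ) (hχ01 : ∀ x, 0 ≤ χ x ∧ χ x ≤ 1)
    (hsupp : ∀ x, η < |x| → χ x = 0) : Integrable (cubeProd χ : ℝ × (Fin d → ℝ) → ℝ) := by
  refine (integrable_indicator_cubeBox (η := η)).mono'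
    (measurable_cubeProd hχ).aestronglyMeasurable (ae_of_all _ fun w => ?_)
  rw [Real.norm_eq_abs, abs_of_nonneg (cubeProd_nonneg (fun x => (hχ01 x).1) w)]
  exact cubeProd_le_indicator_cubeBox hχ01 hsupp w

lemma integral_cubeProd_le (hη : 0 ≤ η) (hχ : Measurable χ) (hχ01 : ∀ x, 0 ≤ χ x ∧ χ x ≤ 1)
    (hsupp : ∀ x, η < |x| → χ x = 0) :
    ∫ w : ℝ × (Fin d → ℝ), cubeProd χ w ≤ 2 * η * (4 * η) ^ d :=
  calc ∫ w, cubeProd χ w ≤ ∫ w, (cubeBox d η).indicator 1 w :=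
        integral_mono (integrable_cubeProd hχ hχ01 hsupp) integrable_indicator_cubeBox
          (cubeProd_le_indicator_cubeBox hχ01 hsupp)
    _ = 2 * η * (4 * η) ^ d := by
        rw [integral_indicator_one measurableSet_cubeBox, measureReal_cubeBox hη]

lemma integral_cubeProd_convZ {f : ℤ → ℝ} (hsupp : ∀ x, η < |x| → χ x = 0)
    (hη : (2 * d + 2) * η < 1) (hint : Integrable (cubeProd χ : ℝ × (Fin d → ℝ) → ℝ))
    {T : Finset (ℤ × (Fin d → ℤ))} (hT : ∀ c ∉ T, cubeProd f c = 0) :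
    ∫ z : ℝ × (Fin d → ℝ), cubeProd (convZ f χ) z =
      (∑ c ∈ T, cubeProd f c) * ∫ z : ℝ × (Fin d → ℝ), cubeProd χ z := by
  have : (volume : Measure (ℝ × (Fin d → ℝ))).IsAddRightInvariant := by
    rw [Measure.volume_eq_prod]; infer_instance
  simp_rw [cubeProd_convZ_eq_sum hsupp hη hT, sum_mul]
  rw [integral_finsetSum _ fun c _ => (hint.comp_sub_right _).const_mul _]
  refine sum_congr rfl fun c _ => ?_
  rw [integral_const_mul, integral_sub_right_eq_self (cubeProd χ)]

end Integral

lemma realGowersPow_convZ {s : ℕ} {η : ℝ} {χ : ℝ → ℝ} {f : ℤ → ℝ}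
    (hsupp : ∀ x, η < |x| → χ x = 0) (hη : (2 * s + 4) * η < 1)
    (hint : Integrable (cubeProd χ : ℝ × (Fin (s + 1) → ℝ) → ℝ)) {A : Finset ℤ}
    (hf : ∀ n ∉ A, f n = 0) (N : ℝ) :
    realGowersPow s (2 * N) (convZ f χ) =
      (∫ z : ℝ × (Fin (s + 1) → ℝ), cubeProd χ z) / 2 ^ (s + 2) * discreteGowersPow s N f := by
  have hT (c : ℤ × (Fin (s + 1) → ℤ)) := cubeProd_eq_zero_of_notMem hf (c := c)
  have hη' : (2 * ((s + 1 : ℕ) : ℝ) + 2) * η < 1 := by push_cast; linarith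
  change 1 / (2 * N) ^ (s + 2) * ∫ z, cubeProd (convZ f χ) z =
    _ / _ * (1 / N ^ (s + 2) * ∑' c, cubeProd f c)
  rw [integral_cubeProd_convZ hsupp hη' hint hT, tsum_eq_sum hT, mul_pow]
  ring

-- For `x < 0`, `x ^ p = exp (log x * p) * cos (p * π)`; these two lemmas spare us proving that
-- the discrete Gowers sum is nonnegative.
lemma Real.rpow_nonneg_of_abs_le_half (x : ℝ) {p : ℝ} (hp : |p| ≤ 1 / 2) : 0 ≤ x ^ p := by
  rcases le_or_gt 0 x with hx | hx
  · exact Real.rpow_nonneg hx p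
  · have hp' := abs_le.1 hp
    rw [Real.rpow_def_of_neg hx]
    exact mul_nonneg (Real.exp_pos _).le (Real.cos_nonneg_of_mem_Icc
      ⟨by nlinarith [Real.pi_pos], by nlinarith [Real.pi_pos]⟩)

lemma Real.mul_rpow_of_nonneg_left {a : ℝ} (ha : 0 ≤ a) (b p : ℝ) :
    (a * b) ^ p = a ^ p * b ^ p := by
  rcases le_or_gt 0 b with hb | hb
  · exact Real.mul_rpow ha hb
  rcases ha.eq_or_lt with rfl | ha
  · rcases eq_or_ne p 0 with rfl | hp
    · simp
    · simp [Real.zero_rpow hp]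
  · rw [Real.rpow_def_of_neg (mul_neg_of_pos_of_neg ha hb), Real.rpow_def_of_neg hb,
      Real.log_mul ha.ne' hb.ne, Real.rpow_def_of_pos ha, add_mul, Real.exp_add, mul_assoc]

lemma mul_rpow_le_gowers_bound {s : ℕ} {η c D : ℝ} (hη : 0 ≤ η) (hc0 : 0 ≤ c)
    (hc : c ≤ 2 ^ (s + 1) * η ^ (s + 2)) :
    (c * D) ^ ((1 : ℝ) / 2 ^ (s + 1)) ≤
      2 ^ (s + 1) * η ^ ((s + 2 : ℝ) / 2 ^ (s + 1)) * D ^ ((1 : ℝ) / 2 ^ (s + 1)) := by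
  set p : ℝ := 1 / 2 ^ (s + 1)
  have hp0 : 0 < p := by positivity
  have hp : p ≤ 1 / 2 := one_div_le_one_div_of_le two_pos (le_self_pow₀ one_le_two (by omega))
  have hDp : 0 ≤ D ^ p := Real.rpow_nonneg_of_abs_le_half D ((abs_of_pos hp0).trans_le hp)
  have hη_pow : (η ^ (s + 2)) ^ p = η ^ ((s + 2 : ℝ) / 2 ^ (s + 1)) := by
    rw [← Real.rpow_natCast, ← Real.rpow_mul hη, mul_one_div]
    push_cast
    rfl
  calc (c * D) ^ p = c ^ p * D ^ p := Real.mul_rpow_of_nonneg_left hc0 D p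
    _ ≤ (2 ^ (s + 1) * η ^ (s + 2)) ^ p * D ^ p := by gcongr
    _ = (2 ^ (s + 1)) ^ p * η ^ ((s + 2 : ℝ) / 2 ^ (s + 1)) * D ^ p := by
      rw [Real.mul_rpow (by positivity) (by positivity), hη_pow]
    _ ≤ 2 ^ (s + 1) * η ^ ((s + 2 : ℝ) / 2 ^ (s + 1)) * D ^ p := by
      gcongr
      exact Real.rpow_le_self_of_one_le (one_le_pow₀ one_le_two) (by linarith)

theorem stmt_14 (s : ℕ) :
    ∃ K > (0 : ℝ), ∃ η₀ > (0 : ℝ), ∀ η : ℝ, 0 < η → η < η₀ →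
      ∀ χ : ℝ → ℝ, Measurable χ → (∀ x, 0 ≤ χ x ∧ χ x ≤ 1) →
        (∀ x : ℝ, η < |x| → χ x = 0) → (∀ x : ℝ, |x| ≤ η / 2 → χ x = 1) →
      ∀ N : ℕ, 0 < N → ∀ f : ℤ → ℝ, (∀ n : ℤ, n < 1 ∨ (N : ℤ) < n → f n = 0) →
        realGowersNorm s (2 * (N : ℝ)) (convZ f χ) ≤
          K * η ^ ((s + 2 : ℝ) / 2 ^ (s + 1)) * discreteGowersNorm s (N : ℝ) f := by
  refine ⟨2 ^ (s + 1), by positivity, 1 / (2 * s + 4), by positivity, ?_⟩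
  intro η hη hηη₀ χ hχ hχ01 hsupp _ N _ f hf
  have hηsmall : (2 * s + 4) * η < 1 := by rwa [lt_div_iff₀ (by positivity), mul_comm] at hηη₀
  have hfA : ∀ n ∉ Finset.Icc 1 (N : ℤ), f n = 0 := fun n hn => hf n (by simp at hn; omega)
  have hI := integral_cubeProd_le (d := s + 1) hη.le hχ hχ01 hsupp
  rw [realGowersNorm, discreteGowersNorm,
    realGowersPow_convZ hsupp hηsmall (integrable_cubeProd hχ hχ01 hsupp) hfA]
  refine mul_rpow_le_gowers_bound hη.le
    (div_nonneg (integral_nonneg fun z => cubeProd_nonneg (fun x => (hχ01 x).1) z)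
      (by positivity)) ?_
  rw [div_le_iff₀ (by positivity)]
  calc _ ≤ 2 * η * (4 * η) ^ (s + 1) := hI
    _ = 2 ^ (s + 1) * η ^ (s + 2) * 2 ^ (s + 2) := by
      rw [mul_pow, show (4 : ℝ) = 2 ^ 2 by norm_num, ← pow_mul]
      ring
end
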